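/- A path in Q is irreducible (i.e., contains no factor of consecutive arrows equal to one of q_i p_{i+1}, p_i q_{i−1}, s_i p_i, s_i q_i) if and only if it is of the form a_{j,i}s^α for some 0 ≤ i, j ≤ n and α ∈ ℕ, namely α loops s_i at the source vertex i followed by the strictly monotone run of arrows from vertex i to vertex j (all p's if j > i, all q's if j < i, and no further arrows if j = i). In particular the irreducible paths are in bijection with triples (j, i, α) ∈ {0,…,n} × {0,…,n} × ℕ. -/

import Mathlib

/-- The arrows of the KLRW quiver on vertices `{0, …, n}`:
`p i : i → i+1` and `q i : i+1 → i` (for `0 ≤ i < n`), and loops `s i : i → i`.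
(Here `p i` stands for the paper's `p_{i+1}` and `q i` for `q_i`.) -/
inductive Arrow (n : ℕ) where
  | p (i : Fin n)
  | q (i : Fin n)
  | s (i : Fin (n + 1))
deriving DecidableEq

namespace Arrow

/-- Source vertex of an arrow. -/
def src {n : ℕ} : Arrow n → Fin (n + 1)
  | .p i => i.castSucc
  | .q i => i.succ
  | .s i => i

/-- Target vertex of an arrow. -/
def tgt {n : ℕ} : Arrow n → Fin (n + 1)
  | .p i => i.succ
  | .q i => i.castSucc
  | .s i => i

end Arrow

/-- `RedPair b a` holds when the two-letter word `b·a` (with `a` applied first) is one of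
the reducible words `q_i p_{i+1}`, `p_i q_{i−1}`, `s_i p_i`, `s_i q_i` of the KLRW
reduction system.  Paths are written in word order (leftmost = last applied). -/
inductive RedPair {n : ℕ} : Arrow n → Arrow n → Prop where
  | qp (i : Fin n) : RedPair (.q i) (.p i)
  | pq (i : Fin n) : RedPair (.p i) (.q i)
  | sp (i : Fin n) : RedPair (.s i.succ) (.p i)
  | sq (i : Fin n) : RedPair (.s i.castSucc) (.q i)

/-- A word is irreducible if no left-hand side of the reduction system occurs as a factor
of consecutive arrows. -/
def Irred {n : ℕ} (u : List (Arrow n)) : Prop :=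
  List.Chain' (fun b a => ¬ RedPair b a) u

/-- A word is composable when consecutive arrows match (in word order, the arrow on the
right is applied first). -/
def Composable {n : ℕ} (u : List (Arrow n)) : Prop :=
  List.Chain' (fun b a => Arrow.src b = Arrow.tgt a) u

/-- A path based at the vertex `v`: a composable word whose first applied arrow (the last
letter of the word) starts at `v`. -/
def IsPathFrom {n : ℕ} (v : Fin (n + 1)) (u : List (Arrow n)) : Prop :=
  Composable u ∧ ∀ a ∈ u.getLast?, Arrow.src a = v

/-- `p`-arrow with natural-number index, when valid. -/
def pArr? (n t : ℕ) : Option (Arrow n) := if h : t < n then some (.p ⟨t, h⟩) else none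

/-- `q`-arrow with natural-number index, when valid. -/
def qArr? (n t : ℕ) : Option (Arrow n) := if h : t < n then some (.q ⟨t, h⟩) else none

/-- The canonical irreducible path `a_{j,i}s^α`: `α` loops `s_i` at the source vertex `i`
(applied first) followed by the strictly monotone run of arrows from `i` to `j`
(all `p`'s if `j > i`, all `q`'s if `j < i`); written in word order. -/
def canon (n : ℕ) (j i : Fin (n + 1)) (α : ℕ) : List (Arrow n) :=
  (if (i : ℕ) < (j : ℕ) then
      ((List.range' (i : ℕ) ((j : ℕ) - (i : ℕ))).reverse).filterMap (pArr? n)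
    else
      (List.range' (j : ℕ) ((i : ℕ) - (j : ℕ))).filterMap (qArr? n))
    ++ List.replicate α (.s i)

/-!
Read a path from right to left and add its arrows one at a time. Whenever the path built so far
is `a_{j,i}s^α`, the reduction rules leave exactly one way to continue from `j`: inside a run of
`p`'s only `p_{j+1}` (since `q_j p_{j+1}` and `s_j p_j` are reducible), inside a run of `q`'s
only `q_{j-1}`, and after the loops alone any of `s_i`, `p_{i+1}`, `q_{i-1}`; each continuation
is again canonical. Conversely a canonical path only contains the factors `pp`, `ps`, `qq`, `qs`
and `ss`, none of which is reducible. A canonical path determines its endpoint `j` and its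
number `α` of loops, which gives the bijection.
-/

theorem Fin.induction_outward {n : ℕ} {i : Fin (n + 1)} {motive : Fin (n + 1) → Prop}
    (base : motive i)
    (up : ∀ k : Fin n, i ≤ k.castSucc → motive k.castSucc → motive k.succ)
    (down : ∀ k : Fin n, k.succ ≤ i → motive k.succ → motive k.castSucc) (j : Fin (n + 1)) :
    motive j := by
  rcases le_total i j with hij | hji
  · induction j using Fin.induction with
    | zero => rwa [Fin.le_zero_iff.mp hij] at base
    | succ k ih =>
      rcases hij.eq_or_lt with rfl | hlt
      · exact base
      · have hk := Fin.le_castSucc_iff.mpr hlt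
        exact up k hk (ih hk)
  · induction j using Fin.reverseInduction with
    | last => rwa [Fin.last_le_iff.mp hji] at base
    | cast k ih =>
      rcases hji.eq_or_lt with rfl | hlt
      · exact base
      · have hk := Fin.castSucc_lt_iff_succ_le.mp hlt
        exact down k hk (ih hk)

variable {n : ℕ}

def target (v : Fin (n + 1)) (u : List (Arrow n)) : Fin (n + 1) :=
  (u.head?.map Arrow.tgt).getD v

lemma composable_cons {a : Arrow n} {u : List (Arrow n)} :
    Composable (a :: u) ↔ (∀ b ∈ u.head?, a.src = b.tgt) ∧ Composable u :=
  List.isChain_cons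

lemma isPathFrom_nil (v : Fin (n + 1)) : IsPathFrom v ([] : List (Arrow n)) :=
  ⟨List.isChain_nil, by simp⟩

lemma isPathFrom_cons {v : Fin (n + 1)} {a : Arrow n} {u : List (Arrow n)} :
    IsPathFrom v (a :: u) ↔ a.src = target v u ∧ IsPathFrom v u := by
  cases u with
  | nil => simp [IsPathFrom, composable_cons, (isPathFrom_nil v).1, target]
  | cons b u =>
    simp only [IsPathFrom, composable_cons, List.getLast?_cons_cons, List.head?_cons,
      Option.mem_def, Option.some.injEq, forall_eq', target, Option.map_some, Option.getD_some]
    tauto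

lemma irred_cons {a : Arrow n} {u : List (Arrow n)} :
    Irred (a :: u) ↔ (∀ b ∈ u.head?, ¬ RedPair a b) ∧ Irred u :=
  List.isChain_cons

lemma canon_self (i : Fin (n + 1)) (α : ℕ) : canon n i i α = List.replicate α (.s i) := by
  simp [canon]

lemma canon_succ_of_le {i : Fin (n + 1)} (k : Fin n) (h : i ≤ k.castSucc) (α : ℕ) :
    canon n k.succ i α = .p k :: canon n k.castSucc i α := by
  rw [Fin.le_iff_val_le_val, Fin.val_castSucc] at h
  have hk : (k : ℕ) + 1 - i = (k - i) + 1 := by omega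
  rcases h.eq_or_lt with h | h
  · simp [canon, h, pArr?]
  · have hik : (i : ℕ) + (k - i) = k := by omega
    simp [canon, hk, h, hik, List.range'_concat, List.filterMap_reverse, pArr?,
      Nat.lt_succ_of_lt h]

lemma canon_castSucc_of_succ_le {i : Fin (n + 1)} (k : Fin n) (h : k.succ ≤ i) (α : ℕ) :
    canon n k.castSucc i α = .q k :: canon n k.succ i α := by
  rw [Fin.le_iff_val_le_val, Fin.val_succ] at h
  have hk : (i : ℕ) - k = (i - (k + 1)) + 1 := by omega
  simp [canon, hk, List.range'_succ, qArr?, Nat.not_lt.mpr h,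
    Nat.not_lt.mpr (Nat.le_of_succ_le h)]

lemma target_canon (j i : Fin (n + 1)) (α : ℕ) : target i (canon n j i α) = j := by
  rcases lt_trichotomy i j with h | rfl | h
  · obtain ⟨k, rfl⟩ := Fin.exists_succ_eq.mpr (Fin.ne_zero_of_lt h)
    rw [canon_succ_of_le k (Fin.le_castSucc_iff.mpr h)]
    rfl
  · rw [canon_self]
    cases α <;> rfl
  · obtain ⟨k, rfl⟩ := Fin.exists_castSucc_eq.mpr (Fin.ne_last_of_lt h)
    rw [canon_castSucc_of_succ_le k (Fin.castSucc_lt_iff_succ_le.mp h)]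
    rfl

lemma count_s_canon (j i : Fin (n + 1)) (α : ℕ) : (canon n j i α).count (.s i) = α := by
  simp only [canon, List.count_append, List.count_replicate_self, add_eq_right, List.count_eq_zero]
  split_ifs <;> simp [List.mem_filterMap, pArr?, qArr?]

lemma exists_eq_p_of_pArr?_eq_some {t : ℕ} {x : Arrow n} (h : pArr? n t = some x) :
    ∃ k, x = .p k := by
  unfold pArr? at h
  split_ifs at h
  exact ⟨_, (Option.some.inj h).symm⟩

lemma exists_eq_q_of_qArr?_eq_some {t : ℕ} {x : Arrow n} (h : qArr? n t = some x) :
    ∃ k, x = .q k := by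
  unfold qArr? at h
  split_ifs at h
  exact ⟨_, (Option.some.inj h).symm⟩

lemma mem_canon_of_le {j i : Fin (n + 1)} (h : i ≤ j) {α : ℕ} {x : Arrow n}
    (hx : x ∈ canon n j i α) : (∃ k, x = .p k) ∨ x = .s i := by
  rcases h.eq_or_lt with rfl | h
  · rw [canon_self] at hx
    exact .inr (List.eq_of_mem_replicate hx)
  · simp only [canon, Fin.lt_def.mp h, if_true, List.mem_append, List.mem_reverse,
      List.mem_filterMap, List.mem_replicate] at hx
    rcases hx with ⟨t, -, ht⟩ | ⟨-, rfl⟩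
    · exact .inl (exists_eq_p_of_pArr?_eq_some ht)
    · exact .inr rfl

lemma mem_canon_of_ge {j i : Fin (n + 1)} (h : j ≤ i) {α : ℕ} {x : Arrow n}
    (hx : x ∈ canon n j i α) : (∃ k, x = .q k) ∨ x = .s i := by
  simp only [canon, Nat.not_lt.mpr (Fin.le_def.mp h), if_false, List.mem_append,
    List.mem_filterMap, List.mem_replicate] at hx
  rcases hx with ⟨t, -, ht⟩ | ⟨-, rfl⟩
  · exact .inl (exists_eq_q_of_qArr?_eq_some ht)
  · exact .inr rfl

lemma isPathFrom_replicate (i : Fin (n + 1)) :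
    ∀ α : ℕ, IsPathFrom i (List.replicate α (Arrow.s i : Arrow n))
  | 0 => isPathFrom_nil i
  | α + 1 => isPathFrom_cons.mpr ⟨by cases α <;> rfl, isPathFrom_replicate i α⟩

lemma isPathFrom_canon (j i : Fin (n + 1)) (α : ℕ) : IsPathFrom i (canon n j i α) := by
  induction j using Fin.induction_outward (i := i) with
  | base => simpa only [canon_self] using isPathFrom_replicate i α
  | up k hk ih =>
    rw [canon_succ_of_le k hk]
    exact isPathFrom_cons.mpr ⟨(target_canon _ i α).symm, ih⟩
  | down k hk ih =>
    rw [canon_castSucc_of_succ_le k hk]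
    exact isPathFrom_cons.mpr ⟨(target_canon _ i α).symm, ih⟩

lemma irred_canon (j i : Fin (n + 1)) (α : ℕ) : Irred (canon n j i α) := by
  induction j using Fin.induction_outward (i := i) with
  | base =>
    rw [canon_self]
    exact List.isChain_replicate_of_rel α nofun
  | up k hk ih =>
    rw [canon_succ_of_le k hk]
    refine irred_cons.mpr ⟨fun b hb hred => ?_, ih⟩
    rcases mem_canon_of_le hk (List.mem_of_mem_head? hb) with ⟨_, rfl⟩ | rfl <;> cases hred
  | down k hk ih =>
    rw [canon_castSucc_of_succ_le k hk]
    refine irred_cons.mpr ⟨fun b hb hred => ?_, ih⟩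
    rcases mem_canon_of_ge hk (List.mem_of_mem_head? hb) with ⟨_, rfl⟩ | rfl <;> cases hred

lemma canon_inj {j j' i : Fin (n + 1)} {α α' : ℕ} :
    canon n j i α = canon n j' i α' ↔ j = j' ∧ α = α' := by
  refine ⟨fun h => ⟨?_, ?_⟩, by rintro ⟨rfl, rfl⟩; rfl⟩
  · simpa only [target_canon] using congrArg (target i) h
  · simpa only [count_s_canon] using congrArg (List.count (Arrow.s i)) h

lemma exists_cons_canon_eq_canon {a : Arrow n} {j i : Fin (n + 1)} {α : ℕ} (hsrc : a.src = j)
    (hred : ∀ b ∈ (canon n j i α).head?, ¬ RedPair a b) :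
    ∃ j' α', a :: canon n j i α = canon n j' i α' := by
  have not_redPair_head {b l} (h : canon n j i α = b :: l) : ¬ RedPair a b :=
    hred b (by simp [h])
  rcases a with k | k | k <;> simp only [Arrow.src] at hsrc <;> subst hsrc
  · rcases le_or_gt i k.castSucc with h | h
    · exact ⟨k.succ, α, (canon_succ_of_le k h α).symm⟩
    · exact absurd (.pq k)
        (not_redPair_head (canon_castSucc_of_succ_le k (Fin.castSucc_lt_iff_succ_le.mp h) α))
  · rcases le_or_gt k.succ i with h | h
    · exact ⟨k.castSucc, α, (canon_castSucc_of_succ_le k h α).symm⟩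
    · exact absurd (.qp k) (not_redPair_head (canon_succ_of_le k (Fin.le_castSucc_iff.mpr h) α))
  · rcases lt_trichotomy i k with h | rfl | h
    · obtain ⟨m, rfl⟩ := Fin.exists_succ_eq.mpr (Fin.ne_zero_of_lt h)
      exact absurd (.sp m) (not_redPair_head (canon_succ_of_le m (Fin.le_castSucc_iff.mpr h) α))
    · exact ⟨i, α + 1, by simp only [canon_self, List.replicate_succ]⟩
    · obtain ⟨m, rfl⟩ := Fin.exists_castSucc_eq.mpr (Fin.ne_last_of_lt h)
      exact absurd (.sq m)
        (not_redPair_head (canon_castSucc_of_succ_le m (Fin.castSucc_lt_iff_succ_le.mp h) α))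

lemma exists_canon_of_irred {v : Fin (n + 1)} :
    ∀ {u : List (Arrow n)}, IsPathFrom v u → Irred u → ∃ j α, u = canon n j v α
  | [], _, _ => ⟨v, 0, by rw [canon_self]; rfl⟩
  | a :: u, hpath, hirr => by
    obtain ⟨hsrc, hpath⟩ := isPathFrom_cons.mp hpath
    obtain ⟨hred, hirr⟩ := irred_cons.mp hirr
    obtain ⟨j, α, rfl⟩ := exists_canon_of_irred hpath hirr
    exact exists_cons_canon_eq_canon (hsrc.trans (target_canon j v α)) hred

theorem irreducible_paths_classification_general (n : ℕ) :
    (∀ (v : Fin (n + 1)) (u : List (Arrow n)), IsPathFrom v u →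
      (Irred u ↔ ∃ (j : Fin (n + 1)) (α : ℕ), u = canon n j v α)) ∧
    Nonempty
      ({x : Fin (n + 1) × List (Arrow n) // IsPathFrom x.1 x.2 ∧ Irred x.2}
        ≃ Fin (n + 1) × Fin (n + 1) × ℕ) := by
  refine ⟨fun v u hu => ⟨exists_canon_of_irred hu, ?_⟩, ⟨(Equiv.ofBijective
    (fun t => ⟨(t.2.1, canon n t.1 t.2.1 t.2.2),
      isPathFrom_canon t.1 t.2.1 t.2.2, irred_canon t.1 t.2.1 t.2.2⟩) ⟨?_, ?_⟩).symm⟩⟩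
  · rintro ⟨j, α, rfl⟩
    exact irred_canon j v α
  · rintro ⟨j, i, α⟩ ⟨j', i', α'⟩ h
    obtain ⟨rfl, h⟩ := Prod.mk.inj (Subtype.mk.inj h)
    obtain ⟨rfl, rfl⟩ := canon_inj.mp h
    rfl
  · rintro ⟨⟨v, u⟩, hpath, hirr⟩
    obtain ⟨j, α, rfl⟩ := exists_canon_of_irred (v := v) hpath hirr
    exact ⟨(j, v, α), rfl⟩

/-- A path in the KLRW quiver is irreducible iff it is of the form `a_{j,i}s^α`; in
particular the based irreducible paths are in bijection with the triples
`(j, i, α) ∈ {0,…,n} × {0,…,n} × ℕ`. -/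
theorem irreducible_paths_classification (n : ℕ) (hn : 0 < n) :
    (∀ (v : Fin (n + 1)) (u : List (Arrow n)), IsPathFrom v u →
      (Irred u ↔ ∃ (j : Fin (n + 1)) (α : ℕ), u = canon n j v α)) ∧
    Nonempty
      ({x : Fin (n + 1) × List (Arrow n) // IsPathFrom x.1 x.2 ∧ Irred x.2}
        ≃ Fin (n + 1) × Fin (n + 1) × ℕ) :=
  irreducible_paths_classification_general n
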